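/- With the same triangular-array setup but assuming n·α_n² → 0, for each fixed t ∈ [0,1] one has E[‖(1/n)X^n_t - t·U_{1,n}‖²] → 0. Consequently the rescaled path converges (in finite-dimensional distributions) to the straight line t ↦ tU with U uniform on S¹. -/

import Mathlib

open MeasureTheory ProbabilityTheory Set Finset Filter BoundedContinuousFunction

/-- The uniform probability distribution on a set of positive finite volume. -/
noncomputable def unifOn (s : Set ℝ) : Measure ℝ :=
  (volume s)⁻¹ • volume.restrict s

/-- The uniform (Haar) distribution on the unit circle `S¹ ⊂ ℂ`. -/
noncomputable def circleUnif : Measure ℂ :=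
  Measure.map (fun θ : ℝ => Complex.exp (Complex.I * θ)) (unifOn (Ico 0 (2 * Real.pi)))

/-- The circle-valued random walk: `U j = exp(i(Θ_0 + ⋯ + Θ_{j-1}))`. -/
noncomputable def walkU (Θ : ℕ → Ω → ℝ) (j : ℕ) (ω : Ω) : ℂ :=
  Complex.exp (Complex.I * (∑ i ∈ Finset.range j, Θ i ω))

/-- The linearly interpolated path
`X^n_t = Σ_{j=1}^{⌊nt⌋} U_j + (nt - ⌊nt⌋) U_{⌊nt⌋+1}` built from the walk. -/
noncomputable def interpX (Θ : ℕ → Ω → ℝ) (n : ℕ) (t : ℝ) (ω : Ω) : ℂ :=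
  ∑ j ∈ Finset.Icc 1 ⌊(n : ℝ) * t⌋₊, walkU Θ j ω +
    (((n : ℝ) * t - ⌊(n : ℝ) * t⌋₊ : ℝ) : ℂ) * walkU Θ (⌊(n : ℝ) * t⌋₊ + 1) ω

/-! Write `U_j = U_1 exp(i S_j)` with `S_j = Θ_1 + ⋯ + Θ_{j-1}`. Then `|U_j - U_1| ≤ |S_j|`, so
`‖X^n_t - nt U_1‖ ≤ ∑_{j ≤ ⌊nt⌋+1} |S_j|`, and by Cauchy–Schwarz together with
`E[S_j²] = Var S_j ≤ j α_n²` (independent, centred, bounded by `α_n`) one gets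
`E‖X^n_t / n - t U_1‖² ≤ 8 n α_n² → 0`.
Since `U_1` is exactly uniform on `S¹`, the vector `(t_i U_1)_i` already has the limit law for
every `n`; convergence in `L²`, hence in probability, of the difference transfers this to
`(X^n_{t_i} / n)_i` (Slutsky). -/

open scoped Topology

section Walk

variable {Ω : Type*} (Θ : ℕ → Ω → ℝ)

lemma norm_walkU (j : ℕ) (ω : Ω) : ‖walkU Θ j ω‖ = 1 := by
  rw [walkU, mul_comm]
  exact Complex.norm_exp_ofReal_mul_I _

lemma walkU_eq_walkU_one_mul {j : ℕ} (hj : 1 ≤ j) (ω : Ω) :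
    walkU Θ j ω = walkU Θ 1 ω * Complex.exp (Complex.I * ↑(∑ i ∈ Ico 1 j, Θ i ω)) := by
  rw [walkU, walkU, ← Complex.exp_add, range_eq_Ico, sum_eq_sum_Ico_succ_bot hj, sum_range_one]
  push_cast
  ring_nf

lemma norm_walkU_sub_walkU_one_le {j : ℕ} (hj : 1 ≤ j) (ω : Ω) :
    ‖walkU Θ j ω - walkU Θ 1 ω‖ ≤ |∑ i ∈ Ico 1 j, Θ i ω| := by
  rw [walkU_eq_walkU_one_mul Θ hj, ← mul_sub_one, norm_mul, norm_walkU, one_mul]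
  exact Real.norm_exp_I_mul_ofReal_sub_one_le

lemma interpX_sub_eq (n : ℕ) (t : ℝ) (ω : Ω) :
    interpX Θ n t ω - ((n * t : ℝ) : ℂ) * walkU Θ 1 ω =
      ∑ j ∈ Icc 1 ⌊n * t⌋₊, (walkU Θ j ω - walkU Θ 1 ω) +
        ((n * t - ⌊n * t⌋₊ : ℝ) : ℂ) * (walkU Θ (⌊n * t⌋₊ + 1) ω - walkU Θ 1 ω) := by
  rw [interpX, sum_sub_distrib, sum_const, Nat.card_Icc, nsmul_eq_mul]
  push_cast
  ring

lemma norm_interpX_le {n : ℕ} {t : ℝ} (ht : 0 ≤ t) (ω : Ω) : ‖interpX Θ n t ω‖ ≤ n * t := by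
  have hfloor := Nat.floor_le (by positivity : 0 ≤ (n : ℝ) * t)
  calc ‖interpX Θ n t ω‖
      ≤ ∑ j ∈ Icc 1 ⌊n * t⌋₊, ‖walkU Θ j ω‖ +
          ‖((n * t - ⌊n * t⌋₊ : ℝ) : ℂ)‖ * ‖walkU Θ (⌊n * t⌋₊ + 1) ω‖ :=
        (norm_add_le _ _).trans (add_le_add (norm_sum_le _ _) (norm_mul_le _ _))
    _ = n * t := by
        rw [Complex.norm_real, Real.norm_eq_abs, abs_of_nonneg (sub_nonneg.2 hfloor)]
        simp [norm_walkU]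

lemma norm_interpX_sub_le {n : ℕ} {t : ℝ} (ht : 0 ≤ t) (ω : Ω) :
    ‖interpX Θ n t ω - ((n * t : ℝ) : ℂ) * walkU Θ 1 ω‖ ≤
      ∑ j ∈ Icc 1 (⌊n * t⌋₊ + 1), |∑ i ∈ Ico 1 j, Θ i ω| := by
  have hfrac : ‖((n * t - ⌊n * t⌋₊ : ℝ) : ℂ)‖ ≤ 1 := by
    rw [Complex.norm_real, Real.norm_eq_abs, abs_le]
    constructor <;> linarith [Nat.floor_le (by positivity : 0 ≤ (n : ℝ) * t),
      Nat.lt_floor_add_one ((n : ℝ) * t)]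
  rw [interpX_sub_eq, sum_Icc_succ_top (by omega)]
  refine (norm_add_le _ _).trans (add_le_add ?_ ?_)
  · exact (norm_sum_le _ _).trans
      (sum_le_sum fun j hj => norm_walkU_sub_walkU_one_le Θ (mem_Icc.1 hj).1 ω)
  · rw [norm_mul]
    exact (mul_le_of_le_one_left (norm_nonneg _) hfrac).trans
      (norm_walkU_sub_walkU_one_le Θ (by omega) ω)

lemma norm_interpX_sub_sq_le {n : ℕ} {t : ℝ} (ht : 0 ≤ t) (ω : Ω) :
    ‖interpX Θ n t ω - ((n * t : ℝ) : ℂ) * walkU Θ 1 ω‖ ^ 2 ≤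
      (⌊n * t⌋₊ + 1) * ∑ j ∈ Icc 1 (⌊n * t⌋₊ + 1), (∑ i ∈ Ico 1 j, Θ i ω) ^ 2 := by
  calc _ ≤ (∑ j ∈ Icc 1 (⌊n * t⌋₊ + 1), |∑ i ∈ Ico 1 j, Θ i ω|) ^ 2 :=
        pow_le_pow_left₀ (norm_nonneg _) (norm_interpX_sub_le Θ ht ω) 2
    _ ≤ #(Icc 1 (⌊n * t⌋₊ + 1)) * ∑ j ∈ Icc 1 (⌊n * t⌋₊ + 1), |∑ i ∈ Ico 1 j, Θ i ω| ^ 2 :=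
        sq_sum_le_card_mul_sum_sq
    _ = _ := by simp [sq_abs]

@[fun_prop]
lemma measurable_walkU [MeasurableSpace Ω] (hΘ : ∀ i, Measurable (Θ i)) (j : ℕ) :
    Measurable (walkU Θ j) := by
  unfold walkU
  fun_prop

@[fun_prop]
lemma measurable_interpX [MeasurableSpace Ω] (hΘ : ∀ i, Measurable (Θ i)) (n : ℕ) (t : ℝ) :
    Measurable (interpX Θ n t) := by
  unfold interpX
  fun_prop

end Walk

section Probability

variable {Ω : Type*} [MeasurableSpace Ω] {P : Measure Ω}

lemma ae_abs_le_of_map_eq_unifOn {f : Ω → ℝ} {a : ℝ} (hf : Measurable f)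
    (h : P.map f = unifOn (Icc (-a) a)) : ∀ᵐ ω ∂P, |f ω| ≤ a := by
  have hnull : P (f ⁻¹' (Icc (-a) a)ᶜ) = 0 := by
    rw [← Measure.map_apply hf measurableSet_Icc.compl, h]
    simp [unifOn, Measure.restrict_apply measurableSet_Icc.compl]
  filter_upwards [measure_eq_zero_iff_ae_notMem.1 hnull] with ω hω
  simpa [abs_le] using hω

lemma integral_eq_zero_of_map_eq_unifOn {f : Ω → ℝ} {a : ℝ} (ha : 0 ≤ a) (hf : Measurable f)
    (h : P.map f = unifOn (Icc (-a) a)) : ∫ ω, f ω ∂P = 0 := by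
  have hmap : ∫ ω, f ω ∂P = ∫ x, x ∂(P.map f) :=
    (integral_map hf.aemeasurable aestronglyMeasurable_id).symm
  rw [hmap, h, unifOn, integral_smul_measure, integral_Icc_eq_integral_Ioc,
    ← intervalIntegral.integral_of_le (by linarith), integral_id]
  simp

lemma integral_sq_sum_le [IsProbabilityMeasure P] {ι : Type*} {X : ι → Ω → ℝ} {s : Finset ι}
    {a : ℝ} (hX : ∀ i ∈ s, AEMeasurable (X i) P)
    (hindep : Set.Pairwise s fun i j => IndepFun (X i) (X j) P)
    (hbound : ∀ i ∈ s, ∀ᵐ ω ∂P, |X i ω| ≤ a) (hmean : ∀ i ∈ s, ∫ ω, X i ω ∂P = 0) :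
    ∫ ω, (∑ i ∈ s, X i ω) ^ 2 ∂P ≤ #s * a ^ 2 := by
  have hL2 : ∀ i ∈ s, MemLp (X i) 2 P := fun i hi =>
    MemLp.of_bound (hX i hi).aestronglyMeasurable a (by simpa using hbound i hi)
  have hsum_mean : ∫ ω, (∑ i ∈ s, X i) ω ∂P = 0 := by
    simp only [Finset.sum_apply]
    rw [integral_finsetSum _ fun i hi => (hL2 i hi).integrable one_le_two]
    exact sum_eq_zero hmean
  calc ∫ ω, (∑ i ∈ s, X i ω) ^ 2 ∂P
      = variance (∑ i ∈ s, X i) P := by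
        rw [variance_of_integral_eq_zero (memLp_finsetSum' s hL2).aemeasurable hsum_mean]
        simp only [Finset.sum_apply]
    _ = ∑ i ∈ s, variance (X i) P := IndepFun.variance_sum hL2 hindep
    _ ≤ ∑ i ∈ s, a ^ 2 := sum_le_sum fun i hi => by
        have h := variance_le_sq_of_bounded (a := -a) (b := a)
          ((hbound i hi).mono fun ω hω => abs_le.1 hω) (hX i hi)
        rwa [show (a - -a) / 2 = a by ring] at h
    _ = #s * a ^ 2 := by rw [sum_const, nsmul_eq_mul]

instance : IsProbabilityMeasure circleUnif := by
  have : IsProbabilityMeasure (unifOn (Ico 0 (2 * Real.pi))) :=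
    cond_isProbabilityMeasure_of_finite (by simp [Real.pi_pos]) measure_Ico_lt_top.ne
  exact Measure.isProbabilityMeasure_map (by fun_prop)

variable {Θ : ℕ → Ω → ℝ}

lemma identDistrib_walkU_one (hΘ : Measurable (Θ 0))
    (h0 : P.map (Θ 0) = unifOn (Ico 0 (2 * Real.pi))) :
    IdentDistrib (walkU Θ 1) id P circleUnif := by
  have hcomp : walkU Θ 1 = (fun θ : ℝ => Complex.exp (Complex.I * θ)) ∘ Θ 0 := by
    funext ω
    simp [walkU]
  have hexp : Measurable fun θ : ℝ => Complex.exp (Complex.I * θ) := by fun_prop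
  refine ⟨hcomp ▸ (hexp.comp hΘ).aemeasurable, aemeasurable_id, ?_⟩
  rw [Measure.map_id, hcomp, ← Measure.map_map hexp hΘ, h0, circleUnif]

lemma integrable_norm_interpX_div_sub_sq [IsFiniteMeasure P] (hΘ : ∀ i, Measurable (Θ i))
    (n : ℕ) {t : ℝ} (ht : t ∈ Set.Icc 0 1) :
    Integrable (fun ω => ‖(1 / (n : ℂ)) * interpX Θ n t ω - (t : ℂ) * walkU Θ 1 ω‖ ^ 2) P := by
  refine Integrable.of_bound (by fun_prop) ((1 + 1) ^ 2) (ae_of_all _ fun ω => ?_)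
  have hX : ‖(1 / (n : ℂ)) * interpX Θ n t ω‖ ≤ 1 := by
    rw [norm_mul, norm_div, norm_one, Complex.norm_natCast]
    calc 1 / (n : ℝ) * ‖interpX Θ n t ω‖ ≤ 1 / n * (n * t) := by
          gcongr
          exact norm_interpX_le Θ ht.1 ω
      _ ≤ 1 := by
          rcases n.eq_zero_or_pos with rfl | hn
          · simp
          · rw [← mul_assoc, one_div_mul_cancel (by positivity), one_mul]
            exact ht.2
  have hU : ‖(t : ℂ) * walkU Θ 1 ω‖ ≤ 1 := by
    rw [norm_mul, norm_walkU, mul_one, Complex.norm_real, Real.norm_eq_abs, abs_le]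
    constructor <;> linarith [ht.1, ht.2]
  rw [Real.norm_eq_abs, abs_of_nonneg (sq_nonneg _)]
  gcongr
  exact (norm_sub_le _ _).trans (add_le_add hX hU)

end Probability

section MeanSquare

variable {Ω : Type*} [MeasurableSpace Ω] (P : Measure Ω) [IsProbabilityMeasure P]

lemma integral_norm_interpX_sub_sq_le {Θ : ℕ → Ω → ℝ} {a : ℝ} (ha : 0 ≤ a)
    (hΘ : ∀ i, Measurable (Θ i)) (hindep : iIndepFun Θ P)
    (hunif : ∀ i ≥ 1, P.map (Θ i) = unifOn (Icc (-a) a)) {n : ℕ} {t : ℝ} (ht : 0 ≤ t) :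
    ∫ ω, ‖interpX Θ n t ω - ((n * t : ℝ) : ℂ) * walkU Θ 1 ω‖ ^ 2 ∂P ≤
      (⌊n * t⌋₊ + 1) ^ 3 * a ^ 2 := by
  set m := ⌊(n : ℝ) * t⌋₊
  have hbound : ∀ i ≥ 1, ∀ᵐ ω ∂P, |Θ i ω| ≤ a := fun i hi =>
    ae_abs_le_of_map_eq_unifOn (hΘ i) (hunif i hi)
  have hint : ∀ j, Integrable (fun ω => (∑ i ∈ Ico 1 j, Θ i ω) ^ 2) P := fun j =>
    (memLp_finsetSum (f := Θ) _ fun i hi => MemLp.of_bound (hΘ i).aestronglyMeasurable a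
      (by simpa only [Real.norm_eq_abs] using hbound i (mem_Ico.1 hi).1)).integrable_sq
  have hsq : ∀ j ∈ Finset.Icc 1 (m + 1),
      ∫ ω, (∑ i ∈ Ico 1 j, Θ i ω) ^ 2 ∂P ≤ ((m : ℝ) + 1) * a ^ 2 := by
    intro j hj
    refine (integral_sq_sum_le (fun i _ => (hΘ i).aemeasurable)
      (fun i _ k _ hik => hindep.indepFun hik) (fun i hi => hbound i (mem_Ico.1 hi).1)
      (fun i hi => integral_eq_zero_of_map_eq_unifOn ha (hΘ i) (hunif i (mem_Ico.1 hi).1))).trans ?_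
    gcongr
    rw [Nat.card_Ico]
    exact_mod_cast (Nat.sub_le j 1).trans (mem_Icc.1 hj).2
  calc ∫ ω, ‖interpX Θ n t ω - ((n * t : ℝ) : ℂ) * walkU Θ 1 ω‖ ^ 2 ∂P
      ≤ ∫ ω, ((m : ℝ) + 1) * ∑ j ∈ Icc 1 (m + 1), (∑ i ∈ Ico 1 j, Θ i ω) ^ 2 ∂P :=
        integral_mono_of_nonneg (ae_of_all _ fun ω => sq_nonneg _)
          ((integrable_finsetSum _ fun j _ => hint j).const_mul _)
          (ae_of_all _ (norm_interpX_sub_sq_le Θ ht))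
    _ = ((m : ℝ) + 1) * ∑ j ∈ Icc 1 (m + 1), ∫ ω, (∑ i ∈ Ico 1 j, Θ i ω) ^ 2 ∂P := by
        rw [integral_const_mul, integral_finsetSum _ fun j _ => hint j]
    _ ≤ ((m : ℝ) + 1) * ∑ j ∈ Icc 1 (m + 1), ((m : ℝ) + 1) * a ^ 2 := by
        gcongr with j hj
        exact hsq j hj
    _ = ((m : ℝ) + 1) ^ 3 * a ^ 2 := by
        rw [sum_const, Nat.card_Icc, nsmul_eq_mul]
        push_cast
        ring

theorem tendsto_integral_norm_interpX_div_sub_sq {α : ℕ → ℝ} (hα : ∀ n, 0 ≤ α n)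
    (hslow : Tendsto (fun n : ℕ => (n : ℝ) * α n ^ 2) atTop (𝓝 0))
    {Θ : ℕ → ℕ → Ω → ℝ} (hΘ : ∀ n i, Measurable (Θ n i)) (hindep : ∀ n, iIndepFun (Θ n) P)
    (hunif : ∀ n, ∀ i ≥ 1, P.map (Θ n i) = unifOn (Icc (-(α n)) (α n)))
    {t : ℝ} (ht : t ∈ Set.Icc 0 1) :
    Tendsto (fun n : ℕ =>
      ∫ ω, ‖(1 / (n : ℂ)) * interpX (Θ n) n t ω - (t : ℂ) * walkU (Θ n) 1 ω‖ ^ 2 ∂P)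
      atTop (𝓝 0) := by
  refine squeeze_zero' (Eventually.of_forall fun n => integral_nonneg fun ω => sq_nonneg _)
    ?_ (by simpa using hslow.const_mul 8)
  filter_upwards [eventually_ge_atTop 1] with n hn
  have hn' : (1 : ℝ) ≤ n := by exact_mod_cast hn
  have hm : (⌊n * t⌋₊ : ℝ) + 1 ≤ 2 * n := by
    have := Nat.floor_le (mul_nonneg (Nat.cast_nonneg n) ht.1)
    nlinarith [ht.2]
  have hrescale : ∀ ω, ‖(1 / (n : ℂ)) * interpX (Θ n) n t ω - (t : ℂ) * walkU (Θ n) 1 ω‖ ^ 2 =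
      ((n : ℝ) ^ 2)⁻¹ * ‖interpX (Θ n) n t ω - ((n * t : ℝ) : ℂ) * walkU (Θ n) 1 ω‖ ^ 2 := by
    intro ω
    have hfactor : (1 / (n : ℂ)) * interpX (Θ n) n t ω - (t : ℂ) * walkU (Θ n) 1 ω =
        (1 / (n : ℂ)) * (interpX (Θ n) n t ω - ((n * t : ℝ) : ℂ) * walkU (Θ n) 1 ω) := by
      have : (n : ℂ) ≠ 0 := by exact_mod_cast (by omega : n ≠ 0)
      field_simp
      push_cast
      ring
    rw [hfactor, norm_mul, mul_pow]
    simp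
  simp_rw [hrescale, integral_const_mul]
  calc (n ^ 2 : ℝ)⁻¹ * ∫ ω, ‖interpX (Θ n) n t ω - ((n * t : ℝ) : ℂ) * walkU (Θ n) 1 ω‖ ^ 2 ∂P
      ≤ (n ^ 2 : ℝ)⁻¹ * ((⌊n * t⌋₊ + 1) ^ 3 * α n ^ 2) := by
        gcongr
        exact integral_norm_interpX_sub_sq_le P (hα n) (hΘ n) (hindep n) (hunif n) ht.1
    _ ≤ (n ^ 2 : ℝ)⁻¹ * ((2 * n) ^ 3 * α n ^ 2) := by gcongr
    _ = 8 * (n * α n ^ 2) := by field_simp; ring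

end MeanSquare

lemma tendstoInMeasure_zero_of_tendsto_integral_norm_sq {ι α E : Type*} [NormedAddCommGroup E]
    {mα : MeasurableSpace α} {μ : Measure α} [IsFiniteMeasure μ] {l : Filter ι}
    {f : ι → α → E} (hf : ∀ i, Integrable (fun x => ‖f i x‖ ^ 2) μ)
    (h : Tendsto (fun i => ∫ x, ‖f i x‖ ^ 2 ∂μ) l (𝓝 0)) :
    TendstoInMeasure μ f l 0 := by
  rw [tendstoInMeasure_iff_measureReal_norm]
  intro ε hε
  refine squeeze_zero (fun i => measureReal_nonneg) (fun i => ?_)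
    (by simpa using h.div_const (ε ^ 2))
  rw [le_div_iff₀ (by positivity), mul_comm]
  have hset : {x | ε ≤ ‖f i x - (0 : α → E) x‖} = {x | ε ^ 2 ≤ ‖f i x‖ ^ 2} := by
    ext x
    simp [pow_le_pow_iff_left₀ hε.le (norm_nonneg _) two_ne_zero]
  rw [hset]
  exact mul_meas_ge_le_integral_of_nonneg (ae_of_all _ fun x => sq_nonneg _) (hf i) _

lemma MeasureTheory.TendstoInMeasure.pi {ι α κ : Type*} [Fintype κ] {E : κ → Type*}
    [∀ k, PseudoEMetricSpace (E k)] {mα : MeasurableSpace α} {μ : Measure α} {l : Filter ι}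
    {f : ι → α → ∀ k, E k} {g : α → ∀ k, E k}
    (h : ∀ k, TendstoInMeasure μ (fun i x => f i x k) l (fun x => g x k)) :
    TendstoInMeasure μ f l g := by
  intro ε hε
  have hsum : Tendsto (fun i => ∑ k, μ {x | ε ≤ edist (f i x k) (g x k)}) l (𝓝 0) := by
    simpa using tendsto_finsetSum univ fun k _ => h k ε hε
  refine tendsto_of_tendsto_of_tendsto_of_le_of_le tendsto_const_nhds hsum (fun i => zero_le)
    fun i => (measure_mono fun x hx => ?_).trans (measure_iUnion_fintype_le μ _)
  by_contra hnot
  simp only [mem_iUnion, mem_ofPred_eq, not_exists, not_le] at hnot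
  exact (not_le.2 ((Finset.sup_lt_iff (bot_lt_iff_ne_bot.2 hε.ne')).2 fun k _ => hnot k)) hx

lemma MeasureTheory.TendstoInDistribution.tendsto_integral {ι E Ω Ω' : Type*} [TopologicalSpace E]
    {mE : MeasurableSpace E} [OpensMeasurableSpace E] {mΩ : MeasurableSpace Ω}
    {mΩ' : MeasurableSpace Ω'} {μ : Measure Ω} [IsProbabilityMeasure μ] {μ' : Measure Ω'}
    [IsProbabilityMeasure μ'] {l : Filter ι} {X : ι → Ω → E} {Z : Ω' → E}
    (h : TendstoInDistribution X l Z (fun _ => μ) μ') (g : E →ᵇ ℝ) :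
    Tendsto (fun i => ∫ ω, g (X i ω) ∂μ) l (𝓝 (∫ ω, g (Z ω) ∂μ')) := by
  have hlim := ProbabilityMeasure.tendsto_iff_forall_integral_tendsto.1 h.tendsto g
  simp only [ProbabilityMeasure.coe_mk] at hlim
  rw [integral_map h.aemeasurable_limit g.continuous.aestronglyMeasurable] at hlim
  simpa only [integral_map (h.forall_aemeasurable _) g.continuous.aestronglyMeasurable] using hlim

theorem stmt_13_general {Ω : Type*} [MeasureSpace Ω] (P : Measure Ω) [IsProbabilityMeasure P]
    (α : ℕ → ℝ) (hα : ∀ n, 0 < α n ∧ α n ≤ Real.pi)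
    (hslow : Tendsto (fun n : ℕ => (n : ℝ) * α n ^ 2) atTop (nhds 0))
    (Θ : ℕ → ℕ → Ω → ℝ) (hmeas : ∀ n i, Measurable (Θ n i))
    (hindep : ∀ n, iIndepFun (Θ n) P)
    (h0 : ∀ n, Measure.map (Θ n 0) P = unifOn (Ico 0 (2 * Real.pi)))
    (hunif : ∀ n, ∀ i ≥ 1, Measure.map (Θ n i) P = unifOn (Icc (-(α n)) (α n))) :
    (∀ t ∈ Set.Icc (0 : ℝ) 1,
      Tendsto
        (fun n : ℕ => ∫ ω, ‖(1 / (n : ℂ)) * interpX (Θ n) n t ω - (t : ℂ) * walkU (Θ n) 1 ω‖ ^ 2 ∂P)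
        atTop (nhds 0)) ∧
    (∀ (k : ℕ) (t : Fin k → ℝ), (∀ i, t i ∈ Set.Icc (0 : ℝ) 1) →
      ∀ g : (Fin k → ℂ) →ᵇ ℝ,
        Tendsto (fun n : ℕ => ∫ ω, g (fun i => (1 / (n : ℂ)) * interpX (Θ n) n (t i) ω) ∂P)
          atTop (nhds (∫ z, g (fun i => (t i : ℂ) * z) ∂circleUnif))) := by
  have hL2 : ∀ t ∈ Set.Icc (0 : ℝ) 1, Tendsto (fun n : ℕ =>
      ∫ ω, ‖(1 / (n : ℂ)) * interpX (Θ n) n t ω - (t : ℂ) * walkU (Θ n) 1 ω‖ ^ 2 ∂P)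
      atTop (𝓝 0) := fun t ht =>
    tendsto_integral_norm_interpX_div_sub_sq P (fun n => (hα n).1.le) hslow hmeas hindep hunif ht
  refine ⟨hL2, fun k t ht g => ?_⟩
  let line : ℂ → Fin k → ℂ := fun z i => t i * z
  have hline : Measurable line := by fun_prop
  have hid : ∀ n, IdentDistrib (line ∘ walkU (Θ n) 1) line P circleUnif := fun n =>
    (identDistrib_walkU_one (hmeas n 0) (h0 n)).comp hline
  have hlaw : TendstoInDistribution (fun n => line ∘ walkU (Θ n) 1) atTop line (fun _ => P)
      circleUnif :=
    tendstoInDistribution_of_identDistrib 0 (fun n => (hid 0).trans (hid n).symm) (hid 0)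
  have hclose : TendstoInMeasure P ((fun (n : ℕ) ω i => (1 / (n : ℂ)) * interpX (Θ n) n (t i) ω) -
      fun n => line ∘ walkU (Θ n) 1) atTop 0 :=
    TendstoInMeasure.pi fun i => tendstoInMeasure_zero_of_tendsto_integral_norm_sq
      (fun n => integrable_norm_interpX_div_sub_sq (hmeas n) n (ht i)) (hL2 (t i) (ht i))
  exact (tendstoInDistribution_of_tendstoInMeasure_sub _ line hlaw hclose
    fun n => by fun_prop).tendsto_integral g

/-- Triangular array of circle walks with `n·α_n² → 0`: for each fixed `t ∈ [0,1]`,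
`E[‖(1/n)X^n_t - t·U_{1,n}‖²] → 0`, and consequently the rescaled path converges in
finite-dimensional distributions to the straight line `t ↦ tU`, `U` uniform on `S¹`. -/
theorem stmt_13 {Ω : Type*} [MeasureSpace Ω] (P : Measure Ω) [IsProbabilityMeasure P]
    (α : ℕ → ℝ) (hα : ∀ n, 0 < α n ∧ α n ≤ Real.pi)
    (hα0 : Tendsto α atTop (nhds 0))
    (hslow : Tendsto (fun n : ℕ => (n : ℝ) * α n ^ 2) atTop (nhds 0))
    (Θ : ℕ → ℕ → Ω → ℝ) (hmeas : ∀ n i, Measurable (Θ n i))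
    (hindep : ∀ n, iIndepFun (Θ n) P)
    (h0 : ∀ n, Measure.map (Θ n 0) P = unifOn (Ico 0 (2 * Real.pi)))
    (hunif : ∀ n, ∀ i ≥ 1, Measure.map (Θ n i) P = unifOn (Icc (-(α n)) (α n))) :
    (∀ t ∈ Set.Icc (0 : ℝ) 1,
      Tendsto
        (fun n : ℕ => ∫ ω, ‖(1 / (n : ℂ)) * interpX (Θ n) n t ω - (t : ℂ) * walkU (Θ n) 1 ω‖ ^ 2 ∂P)
        atTop (nhds 0)) ∧
    (∀ (k : ℕ) (t : Fin k → ℝ), (∀ i, t i ∈ Set.Icc (0 : ℝ) 1) →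
      ∀ g : (Fin k → ℂ) →ᵇ ℝ,
        Tendsto (fun n : ℕ => ∫ ω, g (fun i => (1 / (n : ℂ)) * interpX (Θ n) n (t i) ω) ∂P)
          atTop (nhds (∫ z, g (fun i => (t i : ℂ) * z) ∂circleUnif))) :=
  stmt_13_general P α hα hslow Θ hmeas hindep h0 hunif
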